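/- arXiv:2410.00902 — 3 statements merged into one kernel-verified Lean document; each statement's English description precedes it below -/
import Mathlib

section
/- Let ψ > 0, ν₁ > 0, C > 0, s ≥ 0 and 0 < ω < 1. Then the oil spot price as a function of oil production, E₁ ↦ P₁(E₁) := ψ·ν₁·C·E₁^(ω−1)/(ν₁E₁^ω + s), is strictly decreasing on (0, ∞). -/
open Real

theorem StrictAntiOn.div_of_strictMonoOn {α 𝕜 : Type*} [Preorder α] [Field 𝕜] [LinearOrder 𝕜]
    [IsStrictOrderedRing 𝕜] {f g : α → 𝕜} {S : Set α} (hf : StrictAntiOn f S)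
    (hg : StrictMonoOn g S) (hf₀ : ∀ x ∈ S, 0 ≤ f x) (hg₀ : ∀ x ∈ S, 0 < g x) :
    StrictAntiOn (fun x => f x / g x) S := fun x hx y hy hxy =>
  calc f y / g y ≤ f y / g x := div_le_div_of_nonneg_left (hf₀ y hy) (hg₀ x hx) (hg hx hy hxy).le
    _ < f x / g x := div_lt_div_of_pos_right (hf hx hy hxy) (hg₀ x hx)

/-- The oil spot price is strictly decreasing in oil production: for
`ψ, ν₁, C > 0`, `s ≥ 0` and `0 < ω < 1`, the map
`E₁ ↦ ψν₁C·E₁^(ω−1)/(ν₁E₁^ω + s)` is strictly decreasing on `(0, ∞)`. -/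
theorem stmt_9 (ψ ν₁ C s ω : ℝ)
    (hψ : 0 < ψ) (hν₁ : 0 < ν₁) (hC : 0 < C) (hs : 0 ≤ s)
    (hω₀ : 0 < ω) (hω₁ : ω < 1) :
    StrictAntiOn (fun E₁ : ℝ => ψ * ν₁ * C * E₁ ^ (ω - 1) / (ν₁ * E₁ ^ ω + s))
      (Set.Ioi 0) := by
  have hK : 0 < ψ * ν₁ * C := by positivity
  refine StrictAntiOn.div_of_strictMonoOn ?num ?den ?num_nonneg ?den_pos
  case num => exact fun x hx y _ hxy =>
    mul_lt_mul_of_pos_left (rpow_lt_rpow_of_neg hx hxy (by linarith)) hK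
  case den => exact fun x hx y _ hxy =>
    add_lt_add_left (mul_lt_mul_of_pos_left (rpow_lt_rpow (le_of_lt hx) hxy hω₀) hν₁) s
  case num_nonneg => exact fun x (hx : 0 < x) => by positivity
  case den_pos => exact fun x (hx : 0 < x) => by positivity
end

section
/- Let ρ > 0, γ > 0 with γ ≠ 1, and let α, ψ, η, μ_C, μ_G, σ_C, σ_G, σ_T, φ_C, φ_G, A_C, A_G, i_C, i_G be real numbers with A_C − i_C > 0 and A_G − i_G > 0. Define the constant c := α·log(A_C − i_C) + ψ·log(A_G − i_G) + (α/ρ)(μ_C + i_C − (φ_C/2)i_C² − σ_C²/2) + (ψ/ρ)(μ_G + i_G − (φ_G/2)i_G² − σ_G²/2) + ((1−γ)/(2ρ))(α²σ_C² + ψ²σ_G² + η²σ_T²), and define W : ℝ³ → ℝ by W(x, y, T) = exp((1−γ)(−ηT + αx + ψy + c))/(1−γ). Then (1−γ)W(x,y,T) > 0 everywhere, W is smooth, and W satisfies the post-transition Hamilton–Jacobi–Bellman equation for the technology shock at every (x, y, T): 0 = ρ(1−γ)W·[α(log(A_C − i_C) + x) + ψ(log(A_G − i_G) + y) − ηT −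 (1/(1−γ))·log((1−γ)W)] + (μ_C + i_C − (φ_C/2)i_C² − σ_C²/2)·∂W/∂x + (μ_G + i_G − (φ_G/2)i_G² − σ_G²/2)·∂W/∂y + (σ_C²/2)·∂²W/∂x² + (σ_G²/2)·∂²W/∂y² + (σ_T²/2)·∂²W/∂T². -/
open Real

private lemma hjb_d1 (k a b : ℝ) (hk : k ≠ 0) (t : ℝ) :
    HasDerivAt (fun t => Real.exp (k * (a * t + b)) / k) (a * Real.exp (k * (a * t + b))) t := by
  have h1 : HasDerivAt (fun t : ℝ => k * (a * t + b)) (k * a) t := by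
    simpa using (((hasDerivAt_id t).const_mul a).add_const b).const_mul k
  have h2 := (h1.exp).div_const k
  refine h2.congr_deriv ?_
  rw [div_eq_iff hk]
  ring

private lemma hjb_deriv (k a b : ℝ) (hk : k ≠ 0) (t : ℝ) :
    deriv (fun t => Real.exp (k * (a * t + b)) / k) t = a * Real.exp (k * (a * t + b)) :=
  (hjb_d1 k a b hk t).deriv

private lemma hjb_deriv2 (k a b : ℝ) (hk : k ≠ 0) (t : ℝ) :
    iteratedDeriv 2 (fun t => Real.exp (k * (a * t + b)) / k) t
      = k * a ^ 2 * Real.exp (k * (a * t + b)) := by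
  rw [iteratedDeriv_succ, iteratedDeriv_one]
  have hd : deriv (fun t => Real.exp (k * (a * t + b)) / k)
      = fun t => a * Real.exp (k * (a * t + b)) := funext fun t => hjb_deriv k a b hk t
  rw [hd]
  have h1 : HasDerivAt (fun t : ℝ => k * (a * t + b)) (k * a) t := by
    simpa using (((hasDerivAt_id t).const_mul a).add_const b).const_mul k
  have h2 : HasDerivAt (fun t => a * Real.exp (k * (a * t + b)))
      (a * (k * a * Real.exp (k * (a * t + b)))) t := by
    simpa [mul_comm, mul_assoc, mul_left_comm] using (h1.exp).const_mul a
  rw [h2.deriv]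
  ring

/-- The conjectured post-transition value function for the technology shock,
`W(x,y,T) = exp((1−γ)(−ηT + αx + ψy + c))/(1−γ)` with the explicit constant
`c = c_post,tech`, satisfies `(1−γ)W > 0`, is smooth, and solves the
stationary post-transition HJB equation at every point. -/
theorem stmt_11 (ρ γ α ψ η μC μG σC σG σT φC φG AC AG iC iG c : ℝ)
    (hρ : 0 < ρ) (hγ : 0 < γ) (hγ1 : γ ≠ 1)
    (hAC : 0 < AC - iC) (hAG : 0 < AG - iG)
    (hc : c = α * Real.log (AC - iC) + ψ * Real.log (AG - iG)
      + (α / ρ) * (μC + iC - (φC / 2) * iC ^ 2 - σC ^ 2 / 2)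
      + (ψ / ρ) * (μG + iG - (φG / 2) * iG ^ 2 - σG ^ 2 / 2)
      + ((1 - γ) / (2 * ρ)) * (α ^ 2 * σC ^ 2 + ψ ^ 2 * σG ^ 2 + η ^ 2 * σT ^ 2))
    (W : ℝ → ℝ → ℝ → ℝ)
    (hW : ∀ x y T, W x y T =
      Real.exp ((1 - γ) * (-η * T + α * x + ψ * y + c)) / (1 - γ)) :
    (∀ x y T, 0 < (1 - γ) * W x y T) ∧
    ContDiff ℝ (⊤ : ℕ∞) (fun p : ℝ × ℝ × ℝ => W p.1 p.2.1 p.2.2) ∧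
    ∀ x y T,
      0 = ρ * (1 - γ) * W x y T *
            (α * (Real.log (AC - iC) + x) + ψ * (Real.log (AG - iG) + y)
              - η * T - (1 / (1 - γ)) * Real.log ((1 - γ) * W x y T))
        + (μC + iC - (φC / 2) * iC ^ 2 - σC ^ 2 / 2) * deriv (fun x' => W x' y T) x
        + (μG + iG - (φG / 2) * iG ^ 2 - σG ^ 2 / 2) * deriv (fun y' => W x y' T) y
        + (σC ^ 2 / 2) * iteratedDeriv 2 (fun x' => W x' y T) x
        + (σG ^ 2 / 2) * iteratedDeriv 2 (fun y' => W x y' T) y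
        + (σT ^ 2 / 2) * iteratedDeriv 2 (fun T' => W x y T') T := by
  have hk : (1 - γ) ≠ 0 := sub_ne_zero.2 (Ne.symm hγ1)
  have hpos : ∀ x y T, 0 < (1 - γ) * W x y T := by
    intro x y T
    rw [hW, mul_div_cancel₀ _ hk]
    exact Real.exp_pos _
  refine ⟨hpos, ?_, ?_⟩
  · have : (fun p : ℝ × ℝ × ℝ => W p.1 p.2.1 p.2.2)
        = fun p : ℝ × ℝ × ℝ =>
          Real.exp ((1 - γ) * (-η * p.2.2 + α * p.1 + ψ * p.2.1 + c)) / (1 - γ) := by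
      funext p; rw [hW]
    rw [this]
    exact ContDiff.div_const (by fun_prop) _
  · intro x y T
    have hx : (fun x' => W x' y T)
        = fun x' => Real.exp ((1 - γ) * (α * x' + (-η * T + ψ * y + c))) / (1 - γ) := by
      funext x'; rw [hW]; congr 2; ring
    have hy : (fun y' => W x y' T)
        = fun y' => Real.exp ((1 - γ) * (ψ * y' + (-η * T + α * x + c))) / (1 - γ) := by
      funext y'; rw [hW]; congr 2; ring
    have hT : (fun T' => W x y T')
        = fun T' => Real.exp ((1 - γ) * (-η * T' + (α * x + ψ * y + c))) / (1 - γ) := by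
      funext T'; rw [hW]; congr 2; ring
    rw [hx, hy, hT, hjb_deriv _ _ _ hk, hjb_deriv _ _ _ hk, hjb_deriv2 _ _ _ hk,
      hjb_deriv2 _ _ _ hk, hjb_deriv2 _ _ _ hk, hW,
      mul_div_cancel₀ _ hk, Real.log_exp]
    have e1 : (1 - γ) * (α * x + (-η * T + ψ * y + c))
        = (1 - γ) * (-η * T + α * x + ψ * y + c) := by ring
    have e2 : (1 - γ) * (ψ * y + (-η * T + α * x + c))
        = (1 - γ) * (-η * T + α * x + ψ * y + c) := by ring
    have e3 : (1 - γ) * (-η * T + (α * x + ψ * y + c))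
        = (1 - γ) * (-η * T + α * x + ψ * y + c) := by ring
    rw [e1, e2, e3]
    set E := Real.exp ((1 - γ) * (-η * T + α * x + ψ * y + c)) with hE
    have hρ0 : ρ ≠ 0 := ne_of_gt hρ
    rw [hc]
    field_simp
    ring
end

section
/- Let ρ > 0, γ > 0 with γ ≠ 1, ω ≠ 0, ν₃ > 0, and let α, ψ, η, μ_C, μ_G, σ_C, σ_G, σ_T, φ_C, φ_G, A_C, A_G, i_C, i_G be real numbers with A_C − i_C > 0 and A_G − i_G > 0. Define the constant c := α·log(A_C − i_C) + ψ·log(A_G − i_G) + (ψ/ω)·log(ν₃) + (α/ρ)(μ_C + i_C − (φ_C/2)i_C² − σ_C²/2) + (ψ/ρ)(μ_G + i_G − (φ_G/2)i_G² − σ_G²/2) + ((1−γ)/(2ρ))(α²σ_C² + ψ²σ_G² + η²σ_T²), and define W : ℝ³ → ℝ by W(x, y, T) = exp((1−γ)(−ηT + αx + ψy + c))/(1−γ). Then W satisfies the post-transition Hamilton–Jacobi–Bellman equation for the taxation shock at every (x, y, T): 0 = ρ(1−γ)W·[α(log(A_C − i_C) + x) + ψ((1/ω)log(ν₃) + log(A_G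 − i_G) + y) − ηT − (1/(1−γ))·log((1−γ)W)] + (μ_C + i_C − (φ_C/2)i_C² − σ_C²/2)·∂W/∂x + (μ_G + i_G − (φ_G/2)i_G² − σ_G²/2)·∂W/∂y + (σ_C²/2)·∂²W/∂x² + (σ_G²/2)·∂²W/∂y² + (σ_T²/2)·∂²W/∂T². -/
open Real

/-! Along each coordinate the ansatz `W` is an exponential of an affine function, so every
first and second partial derivative is a constant multiple of `W` itself, and
`log ((1 - γ) W)` is the affine exponent. The HJB right-hand side thus becomes `W` times an
affine expression in `(x, y, T)` whose variable parts cancel; the constant `c` is exactly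
the one that makes the remaining constant vanish. -/

section ExpAffine

variable {f : ℝ → ℝ} {a b d : ℝ}

theorem deriv_eq_mul_of_eq_exp_affine_div (hf : ∀ s, f s = exp (a * s + b) / d) :
    deriv f = fun t => a * f t := by
  have hf' : f = fun s => exp (a * s + b) / d := funext hf
  funext t
  have hlin : HasDerivAt (fun s => a * s + b) a t := by
    simpa using ((hasDerivAt_id t).const_mul a).add_const b
  rw [hf', (hlin.exp.div_const d).deriv]
  ring

theorem iteratedDeriv_two_eq_sq_mul_of_eq_exp_affine_div
    (hf : ∀ s, f s = exp (a * s + b) / d) (t : ℝ) :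
    iteratedDeriv 2 f t = a ^ 2 * f t := by
  have hdiff : Differentiable ℝ f := by
    rw [show f = fun s => exp (a * s + b) / d from funext hf]
    fun_prop
  rw [iteratedDeriv_succ, iteratedDeriv_one, deriv_eq_mul_of_eq_exp_affine_div hf,
    deriv_const_mul _ (hdiff t), deriv_eq_mul_of_eq_exp_affine_div hf]
  ring

end ExpAffine

theorem stmt_12_general (ρ γ ω ν₃ α ψ η μC μG σC σG σT φC φG AC AG iC iG c : ℝ)
    (hρ : 0 < ρ) (hγ1 : γ ≠ 1)
    (hc : c = α * Real.log (AC - iC) + ψ * Real.log (AG - iG)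
      + (ψ / ω) * Real.log ν₃
      + (α / ρ) * (μC + iC - (φC / 2) * iC ^ 2 - σC ^ 2 / 2)
      + (ψ / ρ) * (μG + iG - (φG / 2) * iG ^ 2 - σG ^ 2 / 2)
      + ((1 - γ) / (2 * ρ)) * (α ^ 2 * σC ^ 2 + ψ ^ 2 * σG ^ 2 + η ^ 2 * σT ^ 2))
    (W : ℝ → ℝ → ℝ → ℝ)
    (hW : ∀ x y T, W x y T =
      Real.exp ((1 - γ) * (-η * T + α * x + ψ * y + c)) / (1 - γ)) :
    ∀ x y T,
      0 = ρ * (1 - γ) * W x y T *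
            (α * (Real.log (AC - iC) + x)
              + ψ * ((1 / ω) * Real.log ν₃ + Real.log (AG - iG) + y)
              - η * T - (1 / (1 - γ)) * Real.log ((1 - γ) * W x y T))
        + (μC + iC - (φC / 2) * iC ^ 2 - σC ^ 2 / 2) * deriv (fun x' => W x' y T) x
        + (μG + iG - (φG / 2) * iG ^ 2 - σG ^ 2 / 2) * deriv (fun y' => W x y' T) y
        + (σC ^ 2 / 2) * iteratedDeriv 2 (fun x' => W x' y T) x
        + (σG ^ 2 / 2) * iteratedDeriv 2 (fun y' => W x y' T) y
        + (σT ^ 2 / 2) * iteratedDeriv 2 (fun T' => W x y T') T := by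
  intro x y T
  have hγ0 : (1 : ℝ) - γ ≠ 0 := sub_ne_zero.mpr hγ1.symm
  have hWx : ∀ s, W s y T = exp ((1 - γ) * α * s + (1 - γ) * (-η * T + ψ * y + c)) / (1 - γ) :=
    fun s => by rw [hW]; congr 2; ring
  have hWy : ∀ s, W x s T = exp ((1 - γ) * ψ * s + (1 - γ) * (-η * T + α * x + c)) / (1 - γ) :=
    fun s => by rw [hW]; congr 2; ring
  have hWT : ∀ s, W x y s = exp ((1 - γ) * -η * s + (1 - γ) * (α * x + ψ * y + c)) / (1 - γ) :=
    fun s => by rw [hW]; congr 2; ring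
  have hlog : 1 / (1 - γ) * log ((1 - γ) * W x y T) = -η * T + α * x + ψ * y + c := by
    rw [hW, mul_div_cancel₀ _ hγ0, log_exp]
    field_simp
  rw [deriv_eq_mul_of_eq_exp_affine_div hWx, deriv_eq_mul_of_eq_exp_affine_div hWy,
    iteratedDeriv_two_eq_sq_mul_of_eq_exp_affine_div hWx,
    iteratedDeriv_two_eq_sq_mul_of_eq_exp_affine_div hWy,
    iteratedDeriv_two_eq_sq_mul_of_eq_exp_affine_div hWT, hlog, hc]
  field_simp
  ring

/-- The conjectured post-transition value function for the taxation shock,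
`W(x,y,T) = exp((1−γ)(−ηT + αx + ψy + c))/(1−γ)` with the explicit constant
`c = c_post,tax` (including the `(ψ/ω)log ν₃` term), solves the stationary
post-transition HJB equation at every point. -/
theorem stmt_12 (ρ γ ω ν₃ α ψ η μC μG σC σG σT φC φG AC AG iC iG c : ℝ)
    (hρ : 0 < ρ) (hγ : 0 < γ) (hγ1 : γ ≠ 1) (hω : ω ≠ 0) (hν₃ : 0 < ν₃)
    (hAC : 0 < AC - iC) (hAG : 0 < AG - iG)
    (hc : c = α * Real.log (AC - iC) + ψ * Real.log (AG - iG)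
      + (ψ / ω) * Real.log ν₃
      + (α / ρ) * (μC + iC - (φC / 2) * iC ^ 2 - σC ^ 2 / 2)
      + (ψ / ρ) * (μG + iG - (φG / 2) * iG ^ 2 - σG ^ 2 / 2)
      + ((1 - γ) / (2 * ρ)) * (α ^ 2 * σC ^ 2 + ψ ^ 2 * σG ^ 2 + η ^ 2 * σT ^ 2))
    (W : ℝ → ℝ → ℝ → ℝ)
    (hW : ∀ x y T, W x y T =
      Real.exp ((1 - γ) * (-η * T + α * x + ψ * y + c)) / (1 - γ)) :
    ∀ x y T,
      0 = ρ * (1 - γ) * W x y T *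
            (α * (Real.log (AC - iC) + x)
              + ψ * ((1 / ω) * Real.log ν₃ + Real.log (AG - iG) + y)
              - η * T - (1 / (1 - γ)) * Real.log ((1 - γ) * W x y T))
        + (μC + iC - (φC / 2) * iC ^ 2 - σC ^ 2 / 2) * deriv (fun x' => W x' y T) x
        + (μG + iG - (φG / 2) * iG ^ 2 - σG ^ 2 / 2) * deriv (fun y' => W x y' T) y
        + (σC ^ 2 / 2) * iteratedDeriv 2 (fun x' => W x' y T) x
        + (σG ^ 2 / 2) * iteratedDeriv 2 (fun y' => W x y' T) y
        + (σT ^ 2 / 2) * iteratedDeriv 2 (fun T' => W x y T') T :=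
  stmt_12_general ρ γ ω ν₃ α ψ η μC μG σC σG σT φC φG AC AG iC iG c hρ hγ1 hc W hW
end
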